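/- Let {R̄^(k)}_{k≥1} be a nonnegative sequence satisfying the equality R̄^(k+1) = p R̄^(k) + Σ_{j=1}^J q_j max_{k' ∈ [max(1, k-M+1), k]} (R̄^(k'))^{η_j} for all k ≥ 1, where 0 < p < 1, q_j ≥ 0, η_j > 1, J, M finite, and suppose p + Σ_{j=1}^J q_j (R̄^(1))^{η_j - 1} ≤ δ for some δ ∈ [p, 1) and R̄^(1) > 0. Then lim_{k→∞} R̄^(k+1)/R̄^(k) = p. -/

import Mathlib

open Filter

/-- Maximum of `g` over the integer index range `[a, b]`. -/
noncomputable def seqMax (g : ℕ → ℝ) (a b : ℕ) : ℝ := sSup (g '' Set.Icc a b)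

/-
The lower bound `R (k+1) ≥ p R k` makes `R` positive and lets the window maximum at step `k`
be at most `R k / p ^ (M - 1)`. Since every window value is at most `R 1`, the condition
`p + ∑ q_j R_1^(η_j - 1) ≤ δ` gives `R (k+1) ≤ δ · max_window R`, so `R` decays like
`δ ^ ((k-1)/M)`. Hence in `R (k+1) / R k = p + (∑ q_j max_window R^(η_j)) / R k` the error is at
most `∑ q_j (max_window R)^(η_j - 1) / p ^ (M - 1)`, which tends to `0` because `η_j > 1`.
-/

theorem le_seqMax (g : ℕ → ℝ) {a b x : ℕ} (hx : x ∈ Set.Icc a b) : g x ≤ seqMax g a b :=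
  le_csSup ((Set.finite_Icc a b).image g).bddAbove ⟨x, hx, rfl⟩

theorem seqMax_le (g : ℕ → ℝ) {a b : ℕ} (hab : a ≤ b) {c : ℝ}
    (h : ∀ x ∈ Set.Icc a b, g x ≤ c) : seqMax g a b ≤ c :=
  csSup_le ((Set.nonempty_Icc.2 hab).image g) (by rintro _ ⟨x, hx, rfl⟩; exact h x hx)

theorem tendsto_seqMax {g : ℕ → ℝ} {L : ℝ} {a : ℕ → ℕ} (hg : Tendsto g atTop (nhds L))
    (ha : Tendsto a atTop atTop) (hak : ∀ᶠ k in atTop, a k ≤ k) :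
    Tendsto (fun k => seqMax g (a k) k) atTop (nhds L) := by
  rw [tendsto_order] at hg ⊢
  refine ⟨fun b hb => ?_, fun b hb => ?_⟩
  · filter_upwards [hg.1 b hb, hak] with k hk hak
    exact hk.trans_le (le_seqMax g ⟨hak, le_rfl⟩)
  · obtain ⟨c, hLc, hcb⟩ := exists_between hb
    obtain ⟨N, hN⟩ := eventually_atTop.1 (hg.2 c hLc)
    filter_upwards [ha.eventually_ge_atTop N, hak] with k hNk hak
    exact (seqMax_le g hak fun x hx => (hN x (hNk.trans hx.1)).le).trans_lt hcb

theorem rpow_le_rpow_sub_one_mul {x B η : ℝ} (hx : 0 ≤ x) (hxB : x ≤ B) (hη : 1 ≤ η) :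
    x ^ η ≤ B ^ (η - 1) * x :=
  calc x ^ η = x ^ (η - 1) * x := by
        rw [← Real.rpow_add_one' hx (by linarith), sub_add_cancel]
    _ ≤ B ^ (η - 1) * x := by gcongr

section WindowedContraction

variable {u : ℕ → ℝ} {δ : ℝ} {M : ℕ}

theorem le_pow_div_mul_of_le_mul_seqMax (hM : 1 ≤ M) (hδ0 : 0 ≤ δ) (hδ1 : δ ≤ 1)
    (hu1 : 0 ≤ u 1) (hstep : ∀ k, 1 ≤ k → u (k + 1) ≤ δ * seqMax u (max 1 (k - M + 1)) k) :
    ∀ k, 1 ≤ k → u k ≤ δ ^ ((k - 1) / M) * u 1 := by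
  intro k hk
  induction k using Nat.strong_induction_on with
  | _ k ih =>
  rcases hk.eq_or_lt with rfl | hk1
  · simp
  obtain ⟨m, rfl⟩ := Nat.exists_eq_add_one.2 (zero_lt_one.trans hk1)
  have hm : 1 ≤ m := by omega
  have hwindow : seqMax u (max 1 (m - M + 1)) m ≤ δ ^ ((m - M) / M) * u 1 :=
    seqMax_le u (by omega) fun x ⟨hx1, hx2⟩ => (ih x (by omega) (by omega)).trans <|
      mul_le_mul_of_nonneg_right
        (pow_le_pow_of_le_one hδ0 hδ1 (Nat.div_le_div_right (by omega))) hu1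
  have hexp : (m + 1 - 1) / M ≤ (m - M) / M + 1 :=
    (Nat.div_le_div_right (by omega : m + 1 - 1 ≤ m - M + M)).trans_eq (Nat.add_div_right _ hM)
  calc u (m + 1) ≤ δ * seqMax u (max 1 (m - M + 1)) m := hstep m hm
    _ ≤ δ * (δ ^ ((m - M) / M) * u 1) := by gcongr
    _ = δ ^ ((m - M) / M + 1) * u 1 := by ring
    _ ≤ δ ^ ((m + 1 - 1) / M) * u 1 :=
      mul_le_mul_of_nonneg_right (pow_le_pow_of_le_one hδ0 hδ1 hexp) hu1

theorem tendsto_zero_of_le_mul_seqMax (hM : 1 ≤ M) (hδ0 : 0 ≤ δ) (hδ1 : δ < 1)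
    (hu : ∀ k, 1 ≤ k → 0 ≤ u k)
    (hstep : ∀ k, 1 ≤ k → u (k + 1) ≤ δ * seqMax u (max 1 (k - M + 1)) k) :
    Tendsto u atTop (nhds 0) := by
  have hexp : Tendsto (fun k => (k - 1) / M) atTop atTop :=
    tendsto_atTop_atTop.2 fun b =>
      ⟨b * M + 1, fun k hk => (Nat.le_div_iff_mul_le hM).2 (by omega)⟩
  have hbound : Tendsto (fun k => δ ^ ((k - 1) / M) * u 1) atTop (nhds 0) := by
    simpa using ((tendsto_pow_atTop_nhds_zero_of_lt_one hδ0 hδ1).comp hexp).mul_const (u 1)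
  exact squeeze_zero' (eventually_atTop.2 ⟨1, hu⟩)
    (eventually_atTop.2 ⟨1, le_pow_div_mul_of_le_mul_seqMax hM hδ0 hδ1.le (hu 1 le_rfl) hstep⟩)
    hbound

end WindowedContraction

noncomputable def nonlinearTerm (R : ℕ → ℝ) (q η : ℕ → ℝ) (J M k : ℕ) : ℝ :=
  ∑ j ∈ Finset.range J, q j * seqMax (fun k' => R k' ^ η j) (max 1 (k - M + 1)) k

structure IsTightSystem (R : ℕ → ℝ) (p : ℝ) (q η : ℕ → ℝ) (J M : ℕ) : Prop where
  p_pos : 0 < p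
  p_lt_one : p < 1
  coeff_nonneg : ∀ j, j < J → 0 ≤ q j
  one_lt_exponent : ∀ j, j < J → 1 < η j
  one_le_window : 1 ≤ M
  succ_eq : ∀ k, 1 ≤ k → R (k + 1) = p * R k + nonlinearTerm R q η J M k

namespace IsTightSystem

variable {R : ℕ → ℝ} {p δ : ℝ} {q η : ℕ → ℝ} {J M : ℕ}

theorem windowStart_le (h : IsTightSystem R p q η J M) {k : ℕ} (hk : 1 ≤ k) :
    max 1 (k - M + 1) ≤ k := by
  have := h.one_le_window
  omega

theorem nonlinearTerm_nonneg (h : IsTightSystem R p q η J M) {k : ℕ} (hk : 1 ≤ k)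
    (hRk : 0 ≤ R k) : 0 ≤ nonlinearTerm R q η J M k :=
  Finset.sum_nonneg fun j hj =>
    mul_nonneg (h.coeff_nonneg j (Finset.mem_range.1 hj)) <|
      (Real.rpow_nonneg hRk _).trans (le_seqMax (fun k' => R k' ^ η j) ⟨h.windowStart_le hk, le_rfl⟩)

theorem mul_le_succ (h : IsTightSystem R p q η J M) {k : ℕ} (hk : 1 ≤ k) (hRk : 0 ≤ R k) :
    p * R k ≤ R (k + 1) := by
  rw [h.succ_eq k hk]
  linarith [h.nonlinearTerm_nonneg hk hRk]

theorem pos (h : IsTightSystem R p q η J M) (hR1 : 0 < R 1) : ∀ k, 1 ≤ k → 0 < R k := by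
  intro k hk
  induction k, hk using Nat.le_induction with
  | base => exact hR1
  | succ k hk ih => exact (mul_pos h.p_pos ih).trans_le (h.mul_le_succ hk ih.le)

theorem pow_mul_le (h : IsTightSystem R p q η J M) (hR1 : 0 < R 1) {x k : ℕ} (hx : 1 ≤ x)
    (hxk : x ≤ k) : p ^ (k - x) * R x ≤ R k := by
  induction k, hxk using Nat.le_induction with
  | base => simp
  | succ k hxk ih =>
    calc p ^ (k + 1 - x) * R x = p * (p ^ (k - x) * R x) := by
          rw [show k + 1 - x = k - x + 1 by omega, pow_succ]; ring
      _ ≤ p * R k := mul_le_mul_of_nonneg_left ih h.p_pos.le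
      _ ≤ R (k + 1) := h.mul_le_succ (hx.trans hxk) (h.pos hR1 k (hx.trans hxk)).le

theorem seqMax_le_div_pow (h : IsTightSystem R p q η J M) (hR1 : 0 < R 1) {k : ℕ}
    (hk : 1 ≤ k) : seqMax R (max 1 (k - M + 1)) k ≤ R k / p ^ (M - 1) := by
  refine seqMax_le R (h.windowStart_le hk) fun x ⟨hx1, hx2⟩ => ?_
  have hx : 1 ≤ x := le_of_max_le_left hx1
  rw [le_div_iff₀ (pow_pos h.p_pos _)]
  calc R x * p ^ (M - 1) ≤ p ^ (k - x) * R x := by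
        rw [mul_comm]
        exact mul_le_mul_of_nonneg_right
          (pow_le_pow_of_le_one h.p_pos.le h.p_lt_one.le (by omega)) (h.pos hR1 x hx).le
    _ ≤ R k := h.pow_mul_le hR1 hx hx2

theorem nonlinearTerm_le (h : IsTightSystem R p q η J M) {k : ℕ} (hk : 1 ≤ k) {B : ℝ}
    (hRB : ∀ x ∈ Set.Icc (max 1 (k - M + 1)) k, 0 ≤ R x ∧ R x ≤ B) :
    nonlinearTerm R q η J M k ≤
      (∑ j ∈ Finset.range J, q j * B ^ (η j - 1)) * seqMax R (max 1 (k - M + 1)) k := by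
  rw [nonlinearTerm, Finset.sum_mul]
  refine Finset.sum_le_sum fun j hj => ?_
  have hj := Finset.mem_range.1 hj
  rw [mul_assoc]
  refine mul_le_mul_of_nonneg_left ?_ (h.coeff_nonneg j hj)
  refine seqMax_le _ (h.windowStart_le hk) fun x hx => ?_
  calc R x ^ η j ≤ B ^ (η j - 1) * R x :=
        rpow_le_rpow_sub_one_mul (hRB x hx).1 (hRB x hx).2 (h.one_lt_exponent j hj).le
    _ ≤ B ^ (η j - 1) * seqMax R (max 1 (k - M + 1)) k :=
        mul_le_mul_of_nonneg_left (le_seqMax R hx)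
          (Real.rpow_nonneg ((hRB x hx).1.trans (hRB x hx).2) _)

theorem succ_le_mul_seqMax (h : IsTightSystem R p q η J M) (hR1 : 0 < R 1)
    (hcond : p + ∑ j ∈ Finset.range J, q j * R 1 ^ (η j - 1) ≤ δ) {k : ℕ} (hk : 1 ≤ k)
    (hle : ∀ x ∈ Set.Icc 1 k, R x ≤ R 1) :
    R (k + 1) ≤ δ * seqMax R (max 1 (k - M + 1)) k := by
  set W := seqMax R (max 1 (k - M + 1)) k
  have hRk : R k ≤ W := le_seqMax R ⟨h.windowStart_le hk, le_rfl⟩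
  have hW0 : 0 ≤ W := (h.pos hR1 k hk).le.trans hRk
  have hS := h.nonlinearTerm_le hk (B := R 1) fun x ⟨hx1, hx2⟩ =>
    ⟨(h.pos hR1 x (le_of_max_le_left hx1)).le, hle x ⟨le_of_max_le_left hx1, hx2⟩⟩
  have hsum : ∑ j ∈ Finset.range J, q j * R 1 ^ (η j - 1) ≤ δ - p := by linarith
  calc R (k + 1) = p * R k + nonlinearTerm R q η J M k := h.succ_eq k hk
    _ ≤ p * W + (δ - p) * W :=
        add_le_add (mul_le_mul_of_nonneg_left hRk h.p_pos.le)
          (hS.trans (mul_le_mul_of_nonneg_right hsum hW0))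
    _ = δ * W := by ring

theorem le_apply_one (h : IsTightSystem R p q η J M) (hR1 : 0 < R 1)
    (hcond : p + ∑ j ∈ Finset.range J, q j * R 1 ^ (η j - 1) ≤ δ) (hδ : δ ≤ 1) :
    ∀ k, 1 ≤ k → R k ≤ R 1 := by
  intro k hk
  induction k using Nat.strong_induction_on with
  | _ k ih =>
  rcases hk.eq_or_lt with rfl | hk1
  · exact le_rfl
  obtain ⟨m, rfl⟩ := Nat.exists_eq_add_one.2 (zero_lt_one.trans hk1)
  have hm : 1 ≤ m := by omega
  have hle : ∀ x ∈ Set.Icc 1 m, R x ≤ R 1 := fun x ⟨hx1, hx2⟩ => ih x (by omega) hx1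
  have hW : seqMax R (max 1 (m - M + 1)) m ≤ R 1 :=
    seqMax_le R (h.windowStart_le hm) fun x ⟨hx1, hx2⟩ => hle x ⟨le_of_max_le_left hx1, hx2⟩
  have hW0 : 0 ≤ seqMax R (max 1 (m - M + 1)) m :=
    (h.pos hR1 m hm).le.trans (le_seqMax R ⟨h.windowStart_le hm, le_rfl⟩)
  calc R (m + 1) ≤ δ * seqMax R (max 1 (m - M + 1)) m := h.succ_le_mul_seqMax hR1 hcond hm hle
    _ ≤ R 1 := by nlinarith

theorem tendsto_zero (h : IsTightSystem R p q η J M) (hR1 : 0 < R 1) (hδ0 : 0 ≤ δ)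
    (hδ1 : δ < 1) (hcond : p + ∑ j ∈ Finset.range J, q j * R 1 ^ (η j - 1) ≤ δ) :
    Tendsto R atTop (nhds 0) :=
  tendsto_zero_of_le_mul_seqMax h.one_le_window hδ0 hδ1 (fun k hk => (h.pos hR1 k hk).le)
    fun _ hk => h.succ_le_mul_seqMax hR1 hcond hk fun x hx =>
      h.le_apply_one hR1 hcond hδ1.le x hx.1

theorem tendsto_nonlinearTerm_div (h : IsTightSystem R p q η J M) (hR1 : 0 < R 1)
    (hR0 : Tendsto R atTop (nhds 0)) :
    Tendsto (fun k => nonlinearTerm R q η J M k / R k) atTop (nhds 0) := by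
  set W := fun k => seqMax R (max 1 (k - M + 1)) k
  have hM := h.one_le_window
  have hW : Tendsto W atTop (nhds 0) :=
    tendsto_seqMax hR0 (tendsto_atTop_atTop.2 fun b => ⟨b + M, fun k hk => by omega⟩)
      (eventually_atTop.2 ⟨1, fun k hk => h.windowStart_le hk⟩)
  have hcoef : Tendsto (fun k => (∑ j ∈ Finset.range J, q j * W k ^ (η j - 1)) / p ^ (M - 1))
      atTop (nhds 0) := by
    have hexp : ∀ j ∈ Finset.range J, 0 < η j - 1 := fun j hj =>
      sub_pos.2 (h.one_lt_exponent j (Finset.mem_range.1 hj))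
    convert (tendsto_finsetSum (Finset.range J) fun j hj =>
      (hW.rpow_const (Or.inr (hexp j hj).le)).const_mul (q j)).div_const (p ^ (M - 1)) using 2
    rw [Finset.sum_eq_zero fun j hj => by rw [Real.zero_rpow (hexp j hj).ne', mul_zero],
      zero_div]
  refine squeeze_zero' ?_ ?_ hcoef
  · filter_upwards [eventually_ge_atTop 1] with k hk
    exact div_nonneg (h.nonlinearTerm_nonneg hk (h.pos hR1 k hk).le) (h.pos hR1 k hk).le
  · filter_upwards [eventually_ge_atTop 1] with k hk
    have hRW : ∀ x ∈ Set.Icc (max 1 (k - M + 1)) k, 0 ≤ R x ∧ R x ≤ W k := fun x hx =>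
      ⟨(h.pos hR1 x (le_of_max_le_left hx.1)).le, le_seqMax R hx⟩
    have hsum : 0 ≤ ∑ j ∈ Finset.range J, q j * W k ^ (η j - 1) :=
      Finset.sum_nonneg fun j hj => mul_nonneg (h.coeff_nonneg j (Finset.mem_range.1 hj))
        (Real.rpow_nonneg ((hRW k ⟨h.windowStart_le hk, le_rfl⟩).1.trans
          (hRW k ⟨h.windowStart_le hk, le_rfl⟩).2) _)
    rw [div_le_iff₀ (h.pos hR1 k hk)]
    calc nonlinearTerm R q η J M k ≤ (∑ j ∈ Finset.range J, q j * W k ^ (η j - 1)) * W k :=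
          h.nonlinearTerm_le hk hRW
      _ ≤ (∑ j ∈ Finset.range J, q j * W k ^ (η j - 1)) * (R k / p ^ (M - 1)) :=
          mul_le_mul_of_nonneg_left (h.seqMax_le_div_pow hR1 hk) hsum
      _ = (∑ j ∈ Finset.range J, q j * W k ^ (η j - 1)) / p ^ (M - 1) * R k := by ring

end IsTightSystem

theorem stmt_5_general (R : ℕ → ℝ) (p δ : ℝ) (J M : ℕ) (q η : ℕ → ℝ)
    (hR1 : 0 < R 1)
    (hp : 0 < p) (hp1 : p < 1)
    (hq : ∀ j, j < J → 0 ≤ q j) (hη : ∀ j, j < J → 1 < η j)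
    (hM : 1 ≤ M)
    (hrec : ∀ k, 1 ≤ k →
      R (k + 1) = p * R k + ∑ j ∈ Finset.range J,
        q j * seqMax (fun k' => R k' ^ η j) (max 1 (k - M + 1)) k)
    (hδ1 : p ≤ δ) (hδ2 : δ < 1)
    (hcond : p + ∑ j ∈ Finset.range J, q j * R 1 ^ (η j - 1) ≤ δ) :
    Tendsto (fun k => R (k + 1) / R k) atTop (nhds p) := by
  have h : IsTightSystem R p q η J M := ⟨hp, hp1, hq, hη, hM, hrec⟩
  have hR0 := h.tendsto_zero hR1 (hp.le.trans hδ1) hδ2 hcond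
  have hratio : ∀ᶠ k in atTop, p + nonlinearTerm R q η J M k / R k = R (k + 1) / R k := by
    filter_upwards [eventually_ge_atTop 1] with k hk
    rw [h.succ_eq k hk, add_div, mul_div_cancel_right₀ _ (h.pos hR1 k hk).ne']
  simpa using ((h.tendsto_nonlinearTerm_div hR1 hR0).const_add p).congr' hratio

/-- Asymptotic linear rate of the tight nonlinear system (Proposition 5(b)). -/
theorem stmt_5 (R : ℕ → ℝ) (p δ : ℝ) (J M : ℕ) (q η : ℕ → ℝ)
    (hR : ∀ k, 1 ≤ k → 0 ≤ R k) (hR1 : 0 < R 1)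
    (hp : 0 < p) (hp1 : p < 1)
    (hq : ∀ j, j < J → 0 ≤ q j) (hη : ∀ j, j < J → 1 < η j)
    (hJ : 1 ≤ J) (hM : 1 ≤ M)
    (hrec : ∀ k, 1 ≤ k →
      R (k + 1) = p * R k + ∑ j ∈ Finset.range J,
        q j * seqMax (fun k' => R k' ^ η j) (max 1 (k - M + 1)) k)
    (hδ1 : p ≤ δ) (hδ2 : δ < 1)
    (hcond : p + ∑ j ∈ Finset.range J, q j * R 1 ^ (η j - 1) ≤ δ) :
    Tendsto (fun k => R (k + 1) / R k) atTop (nhds p) :=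
  stmt_5_general R p δ J M q η hR1 hp hp1 hq hη hM hrec hδ1 hδ2 hcond
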